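/- Let p ≥ 2 and 0 < δ ≤ γ, and suppose (δ,p) satisfies δ > (p−1)²/4 when p > 2 (δ > 0 suffices when p = 2). Let u ∈ C¹(ℝ^N) be a positive stable weak solution of −div(w(x)|∇u|^{p−2}∇u) = −g(x)(u^{−δ} + u^{−γ}) in ℝ^N. Then for every β ∈ (0, s_p) there exists a constant c = c(β,p) > 0 such that for every nonnegative ψ ∈ C_c¹(ℝ^N): ∫_{ℝ^N} g(x)(u^{−δ} + u^{−γ}) u^{−2β−p+1} ψ^p dx ≤ c ∫_{ℝ^N} w(x) u^{−2β} |∇ψ|^p dx. -/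

import Mathlib

open MeasureTheory
open scoped RealInnerProductSpace

/-!
Put `τ = β + (p - 2) / 2`, `a = |∇u| ψ / u`, `b = |∇ψ|`, and weigh everything by `w u^(-2β)`, so
that the right-hand side of the claim is `R = ∫ w u^(-2β) b^p`; let `I = ∫ w u^(-2β) a^p` and let
`L` be the left-hand side. Stability tested with `u^(-τ) ψ^(p/2)` gives
`δ L ≤ (p - 1) (τ² I - p τ M + (p² / 4) ∫ w u^(-2β) a^(p-2) b²)`, where `M` is the term carrying
`⟪∇u, ∇ψ⟫`, and the equation tested with `u^(-(2τ+1)) ψ^p` gives `(2τ + 1) I = L + p M`.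
Since `|M| ≤ ∫ w u^(-2β) a^(p-1) b`, Young's inequality bounds both mixed terms by `η I + C R`.
The condition `β < s_p` guarantees `(p - 1) τ² < δ (2τ + 1)`, so for small `η` the two relations
can be solved for `L ≤ c R`.
-/

namespace Real

theorem exists_rpow_mul_rpow_le_add {k p ε : ℝ} (hk : 0 ≤ k) (hkp : k < p) (hε : 0 < ε) :
    ∃ C, 0 < C ∧ ∀ a b : ℝ, 0 ≤ a → 0 ≤ b → a ^ k * b ^ (p - k) ≤ ε * a ^ p + C * b ^ p := by
  have hp : 0 < p := hk.trans_lt hkp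
  rcases hk.eq_or_lt with rfl | hk
  · exact ⟨1, one_pos, fun a b ha _ => by
      simpa using mul_nonneg hε.le (rpow_nonneg ha p)⟩
  set θ := k / p
  have hθ0 : 0 < θ := div_pos hk hp
  have hθ1 : 0 < 1 - θ := by rw [sub_pos, div_lt_one hp]; exact hkp
  set K := (θ / ε) ^ (θ / (1 - θ))
  refine ⟨(1 - θ) * K, by positivity, fun a b ha hb => ?_⟩
  have hK : K ^ (1 - θ) = (θ / ε) ^ θ := by
    rw [← rpow_mul (by positivity), div_mul_cancel₀ _ hθ1.ne']
  have hprod : (ε / θ * a ^ p) ^ θ * (K * b ^ p) ^ (1 - θ) = a ^ k * b ^ (p - k) := by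
    rw [mul_rpow (by positivity) (by positivity), mul_rpow (by positivity) (by positivity), hK,
      ← rpow_mul ha, ← rpow_mul hb, mul_div_cancel₀ _ hp.ne', mul_one_sub,
      mul_div_cancel₀ _ hp.ne']
    calc (ε / θ) ^ θ * a ^ k * ((θ / ε) ^ θ * b ^ (p - k))
        = (ε / θ * (θ / ε)) ^ θ * (a ^ k * b ^ (p - k)) := by
          rw [mul_rpow (by positivity) (by positivity)]; ring
      _ = a ^ k * b ^ (p - k) := by
          rw [show ε / θ * (θ / ε) = 1 by field_simp, one_rpow, one_mul]
  calc a ^ k * b ^ (p - k)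
      = (ε / θ * a ^ p) ^ θ * (K * b ^ p) ^ (1 - θ) := hprod.symm
    _ ≤ θ * (ε / θ * a ^ p) + (1 - θ) * (K * b ^ p) :=
        geom_mean_le_arith_mean2_weighted hθ0.le hθ1.le (by positivity) (by positivity)
          (add_sub_cancel _ _)
    _ = ε * a ^ p + (1 - θ) * K * b ^ p := by
        field_simp

theorem rpow_sq {x : ℝ} (hx : 0 ≤ x) (y : ℝ) : (x ^ y) ^ 2 = x ^ (2 * y) := by
  rw [← rpow_mul_natCast hx, mul_comm]; norm_num

theorem rpow_mul_mul_div_rpow {u n ψ : ℝ} (hu : 0 < u) (hn : 0 ≤ n) (hψ : 0 ≤ ψ) (c k : ℝ) :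
    u ^ c * (n * ψ / u) ^ k = n ^ k * u ^ (c - k) * ψ ^ k := by
  rw [div_rpow (mul_nonneg hn hψ) hu.le, mul_rpow hn hψ, rpow_sub hu]
  ring

theorem rpow_sub_two_mul_sq {x p : ℝ} (hx : 0 ≤ x) (hp : p ≠ 0) :
    x ^ (p - 2) * x ^ 2 = x ^ p := by
  rw [← rpow_add_natCast' hx (by norm_num [hp])]; norm_num

end Real

theorem sub_one_mul_sq_lt_of_lt_sp {p δ β : ℝ} (hp : 2 ≤ p) (hδ : 0 < δ) (hβ0 : 0 < β)
    (hβ : β < if p = 2 then δ + Real.sqrt (δ ^ 2 + δ) else 2 * δ / (p - 1) - (p - 1) / 2) :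
    (p - 1) * (β + (p - 2) / 2) ^ 2 < δ * (2 * (β + (p - 2) / 2) + 1) := by
  rcases hp.eq_or_lt with rfl | hp
  · rw [if_pos rfl] at hβ
    have hs : Real.sqrt (δ ^ 2 + δ) ^ 2 = δ ^ 2 + δ := Real.sq_sqrt (by positivity)
    nlinarith [mul_pos (by linarith : 0 < δ + Real.sqrt (δ ^ 2 + δ) - β)
      (by nlinarith [Real.sqrt_nonneg (δ ^ 2 + δ)] : 0 < β - δ + Real.sqrt (δ ^ 2 + δ))]
  · rw [if_neg hp.ne'] at hβ
    have hσ : (β + (p - 1) / 2) * (p - 1) < 2 * δ := by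
      rw [← lt_div_iff₀ (by linarith)]; linarith
    nlinarith [mul_lt_mul_of_pos_left hσ (by linarith : 0 < β + (p - 1) / 2)]

theorem exists_absorption_constant {p δ τ : ℝ} (hp : 1 ≤ p) (hδ : 0 < δ) (hτ : 0 ≤ τ)
    (hgap : (p - 1) * τ ^ 2 < δ * (2 * τ + 1)) :
    ∃ η, 0 < η ∧ ∀ C₁ C₂ : ℝ, 0 ≤ C₁ → 0 ≤ C₂ → ∃ c, 0 < c ∧ ∀ L I J K M R : ℝ, 0 ≤ R →
      δ * L ≤ (p - 1) * (τ ^ 2 * I - p * τ * M + p ^ 2 / 4 * K) →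
      (2 * τ + 1) * I = L + p * M → |M| ≤ J →
      J ≤ η * I + C₁ * R → K ≤ η * I + C₂ * R → L ≤ c * R := by
  set s := (p - 1) * (p * τ + p ^ 2 / 4)
  have hs : 0 ≤ s := by positivity
  set η := (δ * (2 * τ + 1) - (p - 1) * τ ^ 2) / (2 * (s + δ * p + 1))
  have hη : 0 < η := div_pos (by linarith) (by positivity)
  have hηgap : (p - 1) * τ ^ 2 + η * s < δ * (2 * τ + 1 - p * η) := by
    have : η * (s + δ * p) < δ * (2 * τ + 1) - (p - 1) * τ ^ 2 := by
      rw [div_mul_eq_mul_div, div_lt_iff₀ (by positivity)]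
      nlinarith [mul_pos (sub_pos.2 hgap) (by positivity : 0 < s + δ * p + 2)]
    nlinarith
  refine ⟨η, hη, fun C₁ C₂ hC₁ hC₂ => ?_⟩
  set A := (p - 1) * τ ^ 2 + η * s
  set B := (p - 1) * (p * τ * C₁ + p ^ 2 / 4 * C₂)
  set D := 2 * τ + 1 - p * η
  have hA : 0 ≤ A := by positivity
  have hD : 0 < D := pos_of_mul_pos_right (hA.trans_lt hηgap) hδ.le
  refine ⟨(A * (p * C₁) + B * D) / (δ * D - A) + 1,
    by have := div_nonneg (by positivity : 0 ≤ A * (p * C₁) + B * D) (sub_pos.2 hηgap).le; linarith,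
    fun L I J K M R hR hstab hweak hM hJ hK => ?_⟩
  have hM' := abs_le.1 hM
  have hpτ : 0 ≤ (p - 1) * (p * τ) := by positivity
  have hLI : δ * L ≤ A * I + B * R := by
    simp only [A, B, s]
    nlinarith [mul_le_mul_of_nonneg_left hM'.1 hpτ, mul_le_mul_of_nonneg_left hJ hpτ,
      mul_le_mul_of_nonneg_left hK (by positivity : 0 ≤ (p - 1) * (p ^ 2 / 4))]
  have hp0 : 0 ≤ p := by linarith
  have hIL : D * I ≤ L + p * C₁ * R := by
    simp only [D]
    nlinarith [mul_le_mul_of_nonneg_left hM'.2 hp0, mul_le_mul_of_nonneg_left hJ hp0]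
  have habs : (δ * D - A) * L ≤ (A * (p * C₁) + B * D) * R := by
    nlinarith [mul_le_mul_of_nonneg_left hIL hA, mul_le_mul_of_nonneg_left hLI hD.le]
  have := (le_div_iff₀' (sub_pos.2 hηgap)).2 habs
  rw [add_mul, one_mul, div_mul_eq_mul_div]
  linarith

theorem MeasureTheory.LocallyIntegrable.integrable_mul_of_eq_zero_off_tsupport {X : Type*}
    [TopologicalSpace X] [T2Space X] [MeasurableSpace X] [OpensMeasurableSpace X]
    {μ : Measure X} {w h ψ : X → ℝ}
    (hw : LocallyIntegrable w μ) (hh : Continuous h) (hψ : HasCompactSupport ψ)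
    (h0 : ∀ x ∉ tsupport ψ, h x = 0) : Integrable (fun x => w x * h x) μ :=
  hw.integrable_smul_right_of_hasCompactSupport hh
    (hψ.mono' fun x hx => not_not.1 fun hxψ => hx (h0 x hxψ))

theorem ContDiff.rpow_mul_rpow {E : Type*} [NormedAddCommGroup E] [NormedSpace ℝ E]
    {u ψ : E → ℝ} (hu : ContDiff ℝ 1 u) (hu0 : ∀ x, u x ≠ 0)
    (hψ : ContDiff ℝ 1 ψ) (c : ℝ) {q : ℝ} (hq : 1 ≤ q) :
    ContDiff ℝ 1 fun y => u y ^ c * ψ y ^ q :=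
  (hu.rpow_const_of_ne hu0).mul (hψ.rpow_const_of_le (by exact_mod_cast hq))

theorem HasCompactSupport.rpow_mul_rpow {X : Type*} [TopologicalSpace X] {ψ : X → ℝ}
    (hψ : HasCompactSupport ψ) (u : X → ℝ) (c : ℝ) {q : ℝ} (hq : q ≠ 0) :
    HasCompactSupport fun y => u y ^ c * ψ y ^ q :=
  (hψ.comp_left (g := fun t : ℝ => t ^ q) (Real.zero_rpow hq)).mul_left

section
variable {X : Type*} {g u ψ : X → ℝ} {x : X}

noncomputable def reactionDensity (g u ψ : X → ℝ) (δ γ β p : ℝ) (x : X) : ℝ :=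
  g x * (u x ^ (-δ) + u x ^ (-γ)) * u x ^ (-2 * β - p + 1) * ψ x ^ p

theorem mul_reactionDensity_le (hgx : 0 ≤ g x) (hux : 0 < u x) (hψx : 0 ≤ ψ x)
    {δ γ : ℝ} (hδγ : δ ≤ γ) (β p : ℝ) :
    δ * reactionDensity g u ψ δ γ β p x
      ≤ g x * (δ * u x ^ (-δ - 1) + γ * u x ^ (-γ - 1))
        * (u x ^ (-(β + (p - 2) / 2)) * ψ x ^ (p / 2)) ^ 2 := by
  have hsq : (u x ^ (-(β + (p - 2) / 2)) * ψ x ^ (p / 2)) ^ 2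
      = u x ^ (-2 * β - p + 2) * ψ x ^ p := by
    rw [mul_pow, Real.rpow_sq hux.le, Real.rpow_sq hψx]
    ring_nf
  have hshift : ∀ r : ℝ, u x ^ (-r - 1) * u x ^ (-2 * β - p + 2)
      = u x ^ (-r) * u x ^ (-2 * β - p + 1) := fun r => by
    rw [← Real.rpow_add hux, ← Real.rpow_add hux]; ring_nf
  have hγ : 0 ≤ g x * (u x ^ (-γ) * u x ^ (-2 * β - p + 1) * ψ x ^ p) := by positivity
  rw [hsq, reactionDensity]
  calc δ * (g x * (u x ^ (-δ) + u x ^ (-γ)) * u x ^ (-2 * β - p + 1) * ψ x ^ p)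
      = g x * (δ * (u x ^ (-δ) * u x ^ (-2 * β - p + 1))
          + δ * (u x ^ (-γ) * u x ^ (-2 * β - p + 1))) * ψ x ^ p := by ring
    _ ≤ g x * (δ * (u x ^ (-δ) * u x ^ (-2 * β - p + 1))
          + γ * (u x ^ (-γ) * u x ^ (-2 * β - p + 1))) * ψ x ^ p := by
        nlinarith [mul_le_mul_of_nonneg_right hδγ hγ]
    _ = _ := by rw [← hshift δ, ← hshift γ]; ring

theorem integrable_reactionDensity [TopologicalSpace X] [T2Space X] [MeasurableSpace X]
    [OpensMeasurableSpace X] {μ : Measure X} (hg : LocallyIntegrable g μ)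
    (hu : Continuous u) (hu_pos : ∀ x, 0 < u x) (hψ : Continuous ψ) (hψc : HasCompactSupport ψ)
    (δ γ β : ℝ) {p : ℝ} (hp : 0 < p) :
    Integrable (reactionDensity g u ψ δ γ β p) μ := by
  have hu' : ∀ r : ℝ, Continuous fun x => u x ^ r :=
    fun r => hu.rpow_const fun x => Or.inl (hu_pos x).ne'
  have hcont : Continuous fun x =>
      (u x ^ (-δ) + u x ^ (-γ)) * u x ^ (-2 * β - p + 1) * ψ x ^ p :=
    (((hu' _).add (hu' _)).mul (hu' _)).mul (hψ.rpow_const fun _ => Or.inr hp.le)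
  have h := hg.integrable_mul_of_eq_zero_off_tsupport hcont hψc fun x hx => by
    simp [image_eq_zero_of_notMem_tsupport hx, Real.zero_rpow hp.ne']
  refine h.congr (.of_forall fun x => ?_)
  simp only [reactionDensity]
  ring

end

section
variable {F : Type*} [NormedAddCommGroup F] [InnerProductSpace ℝ F]

theorem norm_smul_add_smul_sq (a b : ℝ) (v w : F) :
    ‖a • v + b • w‖ ^ 2 = a ^ 2 * ‖v‖ ^ 2 + 2 * (a * b) * ⟪v, w⟫ + b ^ 2 * ‖w‖ ^ 2 := by
  rw [norm_add_sq_real, norm_smul, norm_smul, real_inner_smul_left, real_inner_smul_right,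
    mul_pow, mul_pow, Real.norm_eq_abs, Real.norm_eq_abs, sq_abs, sq_abs]
  ring

variable [CompleteSpace F]

theorem gradient_eq_zero_of_notMem_tsupport {f : F → ℝ} {x : F} (hx : x ∉ tsupport f) :
    gradient f x = 0 := by
  simp [gradient, fderiv_of_notMem_tsupport ℝ hx]

theorem ContDiff.continuous_gradient {f : F → ℝ} (hf : ContDiff ℝ 1 f) :
    Continuous (gradient f) :=
  (InnerProductSpace.toDual ℝ F).symm.continuous.comp (hf.continuous_fderiv one_ne_zero)

theorem gradient_rpow_mul_rpow {u ψ : F → ℝ} {x : F} (hu : DifferentiableAt ℝ u x)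
    (hux : u x ≠ 0) (hψ : DifferentiableAt ℝ ψ x) (c : ℝ) {q : ℝ} (hq : 1 ≤ q) :
    gradient (fun y => u y ^ c * ψ y ^ q) x
      = (c * u x ^ (c - 1) * ψ x ^ q) • gradient u x
        + (q * ψ x ^ (q - 1) * u x ^ c) • gradient ψ x := by
  have hderiv : HasFDerivAt (fun y => u y ^ c * ψ y ^ q) _ x :=
    ((Real.hasDerivAt_rpow_const (Or.inl hux)).comp_hasFDerivAt x hu.hasFDerivAt).mul
      ((Real.hasDerivAt_rpow_const (Or.inr hq)).comp_hasFDerivAt x hψ.hasFDerivAt)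
  rw [(hasFDerivAt_iff_hasGradientAt.mp hderiv).gradient]
  simp only [_root_.map_add, _root_.map_smul, gradient, smul_smul, Function.comp_apply]
  module

/-- `w u^(-2β) a^k b^(p-k)` with `a = ‖∇u‖ ψ / u` and `b = ‖∇ψ‖`; in these variables the mixed
terms are compared with `k = p` and `k = 0` by Young's inequality. -/
noncomputable def energyDensity (w u ψ : F → ℝ) (β p k : ℝ) (x : F) : ℝ :=
  w x * u x ^ (-2 * β) * (‖gradient u x‖ * ψ x / u x) ^ k * ‖gradient ψ x‖ ^ (p - k)

noncomputable def crossDensity (w u ψ : F → ℝ) (β p : ℝ) (x : F) : ℝ :=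
  w x * ‖gradient u x‖ ^ (p - 2) * u x ^ (-2 * β - p + 1) * ψ x ^ (p - 1)
    * ⟪gradient u x, gradient ψ x⟫

variable {w u ψ : F → ℝ} {x : F}

theorem energyDensity_eq (hux : 0 < u x) (hψx : 0 ≤ ψ x) (β p k : ℝ) :
    energyDensity w u ψ β p k x
      = w x * ‖gradient u x‖ ^ k * u x ^ (-2 * β - k) * ψ x ^ k * ‖gradient ψ x‖ ^ (p - k) := by
  rw [energyDensity, mul_assoc (w x), Real.rpow_mul_mul_div_rpow hux (norm_nonneg _) hψx]
  ring

theorem stability_density_eq (hu : DifferentiableAt ℝ u x) (hux : 0 < u x)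
    (hψ : DifferentiableAt ℝ ψ x) (hψx : 0 ≤ ψ x) {p : ℝ} (hp : 2 ≤ p) (β : ℝ) :
    w x * ‖gradient u x‖ ^ (p - 2)
        * ‖gradient (fun y => u y ^ (-(β + (p - 2) / 2)) * ψ y ^ (p / 2)) x‖ ^ 2
      = (β + (p - 2) / 2) ^ 2 * energyDensity w u ψ β p p x
        - p * (β + (p - 2) / 2) * crossDensity w u ψ β p x
        + p ^ 2 / 4 * energyDensity w u ψ β p (p - 2) x := by
  have hn := norm_nonneg (gradient u x)
  have hc₁ : ((-(β + (p - 2) / 2)) * u x ^ (-(β + (p - 2) / 2) - 1) * ψ x ^ (p / 2)) ^ 2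
      = (β + (p - 2) / 2) ^ 2 * (u x ^ (-2 * β - p) * ψ x ^ p) := by
    rw [mul_pow, mul_pow, Real.rpow_sq hux.le, Real.rpow_sq hψx, neg_sq]
    ring_nf
  have hc₁₂ : (-(β + (p - 2) / 2)) * u x ^ (-(β + (p - 2) / 2) - 1) * ψ x ^ (p / 2)
      * (p / 2 * ψ x ^ (p / 2 - 1) * u x ^ (-(β + (p - 2) / 2)))
      = -(p / 2 * (β + (p - 2) / 2)) * (u x ^ (-2 * β - p + 1) * ψ x ^ (p - 1)) := by
    have hu' : u x ^ (-(β + (p - 2) / 2) - 1) * u x ^ (-(β + (p - 2) / 2))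
        = u x ^ (-2 * β - p + 1) := by
      rw [← Real.rpow_add hux]; ring_nf
    have hψ' : ψ x ^ (p / 2) * ψ x ^ (p / 2 - 1) = ψ x ^ (p - 1) := by
      rw [← Real.rpow_add' hψx (by linarith)]; ring_nf
    rw [← hu', ← hψ']
    ring
  have hc₂ : (p / 2 * ψ x ^ (p / 2 - 1) * u x ^ (-(β + (p - 2) / 2))) ^ 2
      = p ^ 2 / 4 * (u x ^ (-2 * β - (p - 2)) * ψ x ^ (p - 2)) := by
    rw [mul_pow, mul_pow, Real.rpow_sq hux.le, Real.rpow_sq hψx]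
    ring_nf
  rw [gradient_rpow_mul_rpow hu hux.ne' hψ _ (by linarith), norm_smul_add_smul_sq, hc₁, hc₁₂,
    hc₂, energyDensity_eq hux hψx, energyDensity_eq hux hψx, crossDensity, sub_self,
    Real.rpow_zero, sub_sub_cancel, Real.rpow_two,
    ← Real.rpow_sub_two_mul_sq hn (by linarith : p ≠ 0)]
  ring_nf

theorem weak_density_eq (hu : DifferentiableAt ℝ u x) (hux : 0 < u x)
    (hψ : DifferentiableAt ℝ ψ x) (hψx : 0 ≤ ψ x) {p : ℝ} (hp : 2 ≤ p) (β : ℝ) :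
    w x * ‖gradient u x‖ ^ (p - 2)
        * ⟪gradient u x, gradient (fun y => u y ^ (-2 * β - p + 1) * ψ y ^ p) x⟫
      = -(2 * β + p - 1) * energyDensity w u ψ β p p x + p * crossDensity w u ψ β p x := by
  rw [gradient_rpow_mul_rpow hu hux.ne' hψ _ (by linarith), inner_add_right,
    real_inner_smul_right, real_inner_smul_right, real_inner_self_eq_norm_sq,
    energyDensity_eq hux hψx, crossDensity, sub_self, Real.rpow_zero,
    show -2 * β - p + 1 - 1 = -2 * β - p by ring,
    ← Real.rpow_sub_two_mul_sq (norm_nonneg _) (by linarith : p ≠ 0)]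
  ring

theorem abs_crossDensity_le (hwx : 0 ≤ w x) (hux : 0 < u x) (hψx : 0 ≤ ψ x) (β : ℝ) {p : ℝ}
    (hp : 2 ≤ p) : |crossDensity w u ψ β p x| ≤ energyDensity w u ψ β p (p - 1) x := by
  have hn := norm_nonneg (gradient u x)
  have hm : 0 ≤ w x * ‖gradient u x‖ ^ (p - 2) * u x ^ (-2 * β - p + 1) * ψ x ^ (p - 1) := by
    positivity
  rw [crossDensity, abs_mul, abs_of_nonneg hm, energyDensity_eq hux hψx, sub_sub_cancel,
    Real.rpow_one, show p - 1 = p - 2 + 1 by ring, Real.rpow_add_one' hn (by linarith),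
    show -2 * β - (p - 2 + 1) = -2 * β - p + 1 by ring]
  calc w x * ‖gradient u x‖ ^ (p - 2) * u x ^ (-2 * β - p + 1) * ψ x ^ (p - 2 + 1)
        * |⟪gradient u x, gradient ψ x⟫|
      ≤ w x * ‖gradient u x‖ ^ (p - 2) * u x ^ (-2 * β - p + 1) * ψ x ^ (p - 2 + 1)
        * (‖gradient u x‖ * ‖gradient ψ x‖) :=
        mul_le_mul_of_nonneg_left (abs_real_inner_le_norm _ _) (by positivity)
    _ = _ := by ring

variable [MeasurableSpace F] [BorelSpace F] {μ : Measure F}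

theorem integrable_energyDensity (hw : LocallyIntegrable w μ) (hu : ContDiff ℝ 1 u)
    (hu_pos : ∀ x, 0 < u x) (hψ : ContDiff ℝ 1 ψ) (hψc : HasCompactSupport ψ) (β : ℝ)
    {p k : ℝ} (hp : 0 < p) (hk : 0 ≤ k) (hkp : k ≤ p) :
    Integrable (energyDensity w u ψ β p k) μ := by
  have hcont : Continuous fun x =>
      u x ^ (-2 * β) * (‖gradient u x‖ * ψ x / u x) ^ k * ‖gradient ψ x‖ ^ (p - k) :=
    ((hu.continuous.rpow_const fun x => Or.inl (hu_pos x).ne').mul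
      (((hu.continuous_gradient.norm.mul hψ.continuous).div hu.continuous
        fun x => (hu_pos x).ne').rpow_const fun _ => Or.inr hk)).mul
      (hψ.continuous_gradient.norm.rpow_const fun _ => Or.inr (sub_nonneg.2 hkp))
  have h := hw.integrable_mul_of_eq_zero_off_tsupport hcont hψc fun x hx => by
    rw [image_eq_zero_of_notMem_tsupport hx, gradient_eq_zero_of_notMem_tsupport hx, norm_zero,
      mul_zero, zero_div]
    rcases hk.eq_or_lt with rfl | hk
    · simp [Real.zero_rpow hp.ne']
    · simp [Real.zero_rpow hk.ne']
  refine h.congr (.of_forall fun x => ?_)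
  simp only [energyDensity]
  ring

theorem integrable_crossDensity (hw : LocallyIntegrable w μ) (hu : ContDiff ℝ 1 u)
    (hu_pos : ∀ x, 0 < u x) (hψ : ContDiff ℝ 1 ψ) (hψc : HasCompactSupport ψ) (β : ℝ)
    {p : ℝ} (hp : 2 ≤ p) :
    Integrable (crossDensity w u ψ β p) μ := by
  have hcont : Continuous fun x => ‖gradient u x‖ ^ (p - 2) * u x ^ (-2 * β - p + 1)
      * ψ x ^ (p - 1) * ⟪gradient u x, gradient ψ x⟫ :=
    (((hu.continuous_gradient.norm.rpow_const fun _ => Or.inr (by linarith)).mul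
      (hu.continuous.rpow_const fun x => Or.inl (hu_pos x).ne')).mul
      (hψ.continuous.rpow_const fun _ => Or.inr (by linarith))).mul
      (hu.continuous_gradient.inner hψ.continuous_gradient)
  have h := hw.integrable_mul_of_eq_zero_off_tsupport hcont hψc fun x hx => by
    rw [image_eq_zero_of_notMem_tsupport hx, Real.zero_rpow (by linarith)]
    simp
  refine h.congr (.of_forall fun x => ?_)
  simp only [crossDensity]
  ring


theorem integral_energyDensity_le (hw : LocallyIntegrable w μ) (hw_pos : ∀ᵐ x ∂μ, 0 < w x)
    (hu : ContDiff ℝ 1 u) (hu_pos : ∀ x, 0 < u x) (hψ : ContDiff ℝ 1 ψ)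
    (hψc : HasCompactSupport ψ) (hψ0 : ∀ x, 0 ≤ ψ x) (β : ℝ) {p k η C : ℝ} (hk : 0 ≤ k)
    (hkp : k < p) (hY : ∀ a b : ℝ, 0 ≤ a → 0 ≤ b → a ^ k * b ^ (p - k) ≤ η * a ^ p + C * b ^ p) :
    ∫ x, energyDensity w u ψ β p k x ∂μ
      ≤ η * ∫ x, energyDensity w u ψ β p p x ∂μ + C * ∫ x, energyDensity w u ψ β p 0 x ∂μ := by
  have hp : 0 < p := hk.trans_lt hkp
  have hint : ∀ {k}, 0 ≤ k → k ≤ p → Integrable (energyDensity w u ψ β p k) μ :=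
    fun hk hkp => integrable_energyDensity hw hu hu_pos hψ hψc β hp hk hkp
  rw [← integral_const_mul, ← integral_const_mul,
    ← integral_add ((hint hp.le le_rfl).const_mul _) ((hint le_rfl hp.le).const_mul _)]
  refine integral_mono_ae (hint hk hkp.le)
    (((hint hp.le le_rfl).const_mul _).add ((hint le_rfl hp.le).const_mul _)) ?_
  filter_upwards [hw_pos] with x hwx
  have ha : 0 ≤ ‖gradient u x‖ * ψ x / u x := by have := hψ0 x; have := hu_pos x; positivity
  have hm : 0 ≤ w x * u x ^ (-2 * β) := by have := hu_pos x; positivity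
  have := mul_le_mul_of_nonneg_left (hY _ _ ha (norm_nonneg (gradient ψ x))) hm
  simp only [energyDensity, sub_self, sub_zero, Real.rpow_zero]
  linarith

theorem abs_integral_crossDensity_le (hw : LocallyIntegrable w μ) (hw_pos : ∀ᵐ x ∂μ, 0 < w x)
    (hu : ContDiff ℝ 1 u) (hu_pos : ∀ x, 0 < u x) (hψ : ContDiff ℝ 1 ψ)
    (hψc : HasCompactSupport ψ) (hψ0 : ∀ x, 0 ≤ ψ x) (β : ℝ) {p : ℝ} (hp : 2 ≤ p) :
    |∫ x, crossDensity w u ψ β p x ∂μ| ≤ ∫ x, energyDensity w u ψ β p (p - 1) x ∂μ :=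
  (abs_integral_le_integral_abs).trans <| integral_mono_ae
    (integrable_crossDensity hw hu hu_pos hψ hψc β hp).abs
    (integrable_energyDensity hw hu hu_pos hψ hψc β (by linarith) (by linarith) (by linarith))
    (by filter_upwards [hw_pos] with x hwx
        exact abs_crossDensity_le hwx.le (hu_pos x) (hψ0 x) β hp)

theorem mul_integral_reactionDensity_le_of_stable {g : F → ℝ} (hw : LocallyIntegrable w μ)
    (hg : LocallyIntegrable g μ) (hg_pos : ∀ᵐ x ∂μ, 0 < g x) (hu : ContDiff ℝ 1 u) (hu_pos : ∀ x, 0 < u x)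
    (hψ : ContDiff ℝ 1 ψ) (hψc : HasCompactSupport ψ) (hψ0 : ∀ x, 0 ≤ ψ x) (β : ℝ)
    {p δ γ : ℝ} (hp : 2 ≤ p) (hδγ : δ ≤ γ)
    (stable : ∀ φ : F → ℝ, ContDiff ℝ 1 φ → HasCompactSupport φ →
      ∫ x, g x * (δ * u x ^ (-δ - 1) + γ * u x ^ (-γ - 1)) * φ x ^ 2 ∂μ
        ≤ (p - 1) * ∫ x, w x * ‖gradient u x‖ ^ (p - 2) * ‖gradient φ x‖ ^ 2 ∂μ) :
    δ * ∫ x, reactionDensity g u ψ δ γ β p x ∂μ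
      ≤ (p - 1) * ((β + (p - 2) / 2) ^ 2 * ∫ x, energyDensity w u ψ β p p x ∂μ
        - p * (β + (p - 2) / 2) * ∫ x, crossDensity w u ψ β p x ∂μ
        + p ^ 2 / 4 * ∫ x, energyDensity w u ψ β p (p - 2) x ∂μ) := by
  set φ : F → ℝ := fun y => u y ^ (-(β + (p - 2) / 2)) * ψ y ^ (p / 2)
  have hφ : ContDiff ℝ 1 φ := hu.rpow_mul_rpow (fun x => (hu_pos x).ne') hψ _ (by linarith)
  have hφc : HasCompactSupport φ := hψc.rpow_mul_rpow u _ (by positivity)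
  have hu' : ∀ r : ℝ, Continuous fun x => u x ^ r :=
    fun r => hu.continuous.rpow_const fun x => Or.inl (hu_pos x).ne'
  have hlhs :
      Integrable (fun x => g x * (δ * u x ^ (-δ - 1) + γ * u x ^ (-γ - 1)) * φ x ^ 2) μ := by
    have hcont : Continuous fun x => (δ * u x ^ (-δ - 1) + γ * u x ^ (-γ - 1)) * φ x ^ 2 :=
      ((continuous_const.mul (hu' _)).add (continuous_const.mul (hu' _))).mul
        (hφ.continuous.pow 2)
    have h := hg.integrable_mul_of_eq_zero_off_tsupport hcont hψc fun x hx => by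
      simp [φ, image_eq_zero_of_notMem_tsupport hx, Real.zero_rpow (by positivity : p / 2 ≠ 0)]
    exact h.congr (.of_forall fun x => by ring)
  have hrhs : (fun x => w x * ‖gradient u x‖ ^ (p - 2) * ‖gradient φ x‖ ^ 2)
      = fun x => (β + (p - 2) / 2) ^ 2 * energyDensity w u ψ β p p x
        - p * (β + (p - 2) / 2) * crossDensity w u ψ β p x
        + p ^ 2 / 4 * energyDensity w u ψ β p (p - 2) x :=
    funext fun x => stability_density_eq (hu.differentiable one_ne_zero x) (hu_pos x)
      (hψ.differentiable one_ne_zero x) (hψ0 x) hp β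
  have hEp := integrable_energyDensity (μ := μ) (k := p) hw hu hu_pos hψ hψc β (by linarith)
    (by linarith) le_rfl
  have hE₂ := integrable_energyDensity (μ := μ) (p := p) (k := p - 2) hw hu hu_pos hψ hψc β
    (by linarith) (by linarith) (by linarith)
  have hM := integrable_crossDensity (μ := μ) hw hu hu_pos hψ hψc β hp
  calc δ * ∫ x, reactionDensity g u ψ δ γ β p x ∂μ
      = ∫ x, δ * reactionDensity g u ψ δ γ β p x ∂μ := (integral_const_mul _ _).symm
    _ ≤ ∫ x, g x * (δ * u x ^ (-δ - 1) + γ * u x ^ (-γ - 1)) * φ x ^ 2 ∂μ := by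
        refine integral_mono_ae ((integrable_reactionDensity hg hu.continuous hu_pos
          hψ.continuous hψc δ γ β (by linarith)).const_mul δ) hlhs ?_
        filter_upwards [hg_pos] with x hgx
        exact mul_reactionDensity_le hgx.le (hu_pos x) (hψ0 x) hδγ β p
    _ ≤ (p - 1) * ∫ x, w x * ‖gradient u x‖ ^ (p - 2) * ‖gradient φ x‖ ^ 2 ∂μ := stable φ hφ hφc
    _ = _ := by
        rw [hrhs, integral_add ?_ (hE₂.const_mul _),
          integral_sub (hEp.const_mul _) (hM.const_mul _), integral_const_mul,
          integral_const_mul, integral_const_mul]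
        exact (hEp.const_mul _).sub (hM.const_mul _)

theorem integral_energyDensity_eq_of_weak {g : F → ℝ} (hw : LocallyIntegrable w μ)
    (hu : ContDiff ℝ 1 u) (hu_pos : ∀ x, 0 < u x)
    (hψ : ContDiff ℝ 1 ψ) (hψc : HasCompactSupport ψ) (hψ0 : ∀ x, 0 ≤ ψ x) (β : ℝ)
    {p δ γ : ℝ} (hp : 2 ≤ p)
    (weak : ∀ φ : F → ℝ, ContDiff ℝ 1 φ → HasCompactSupport φ →
      ∫ x, w x * ‖gradient u x‖ ^ (p - 2) * ⟪gradient u x, gradient φ x⟫ ∂μ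
        = ∫ x, g x * (-(u x ^ (-δ)) - u x ^ (-γ)) * φ x ∂μ) :
    (2 * β + p - 1) * ∫ x, energyDensity w u ψ β p p x ∂μ
      = ∫ x, reactionDensity g u ψ δ γ β p x ∂μ + p * ∫ x, crossDensity w u ψ β p x ∂μ := by
  set φ : F → ℝ := fun y => u y ^ (-2 * β - p + 1) * ψ y ^ p
  have hφ : ContDiff ℝ 1 φ := hu.rpow_mul_rpow (fun x => (hu_pos x).ne') hψ _ (by linarith)
  have hφc : HasCompactSupport φ := hψc.rpow_mul_rpow u _ (by positivity)
  have hlhs : (fun x => w x * ‖gradient u x‖ ^ (p - 2) * ⟪gradient u x, gradient φ x⟫)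
      = fun x => -(2 * β + p - 1) * energyDensity w u ψ β p p x
        + p * crossDensity w u ψ β p x :=
    funext fun x => weak_density_eq (hu.differentiable one_ne_zero x) (hu_pos x)
      (hψ.differentiable one_ne_zero x) (hψ0 x) hp β
  have hrhs : (fun x => g x * (-(u x ^ (-δ)) - u x ^ (-γ)) * φ x)
      = fun x => -reactionDensity g u ψ δ γ β p x :=
    funext fun x => by simp only [φ, reactionDensity]; ring
  have h := weak φ hφ hφc
  rw [hlhs, hrhs, integral_neg, integral_add
    ((integrable_energyDensity (p := p) (k := p) hw hu hu_pos hψ hψc β (by linarith) (by linarith)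
      le_rfl).const_mul _)
    ((integrable_crossDensity hw hu hu_pos hψ hψc β hp).const_mul _),
    integral_const_mul, integral_const_mul] at h
  linarith

end

theorem stmt_2_general
    {N : ℕ}
    (p : ℝ) (hp : 2 ≤ p)
    (δ γ : ℝ) (hδ : 0 < δ) (hδγ : δ ≤ γ)
    (sp : ℝ) (hsp : sp = if p = 2 then δ + Real.sqrt (δ ^ 2 + δ) else 2 * δ / (p - 1) - (p - 1) / 2)
    (w g : EuclideanSpace ℝ (Fin N) → ℝ)
    (hw_loc : LocallyIntegrable w volume)
    (hg_loc : LocallyIntegrable g volume)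
    (hw_pos : ∀ᵐ x ∂volume, 0 < w x)
    (hg_pos : ∀ᵐ x ∂volume, 0 < g x)
    (u : EuclideanSpace ℝ (Fin N) → ℝ)
    (hu : ContDiff ℝ 1 u)
    (hu_pos : ∀ x, 0 < u x)
    (weak : ∀ φ : EuclideanSpace ℝ (Fin N) → ℝ, ContDiff ℝ 1 φ → HasCompactSupport φ →
      ∫ x, w x * ‖gradient u x‖ ^ (p - 2) * ⟪gradient u x, gradient φ x⟫
        = ∫ x, g x * (-(u x ^ (-δ)) - u x ^ (-γ)) * φ x)
    (stable : ∀ φ : EuclideanSpace ℝ (Fin N) → ℝ, ContDiff ℝ 1 φ → HasCompactSupport φ →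
      ∫ x, g x * (δ * u x ^ (-δ - 1) + γ * u x ^ (-γ - 1)) * φ x ^ 2
        ≤ (p - 1) * ∫ x, w x * ‖gradient u x‖ ^ (p - 2) * ‖gradient φ x‖ ^ 2) :
    ∀ β ∈ Set.Ioo (0 : ℝ) sp, ∃ c : ℝ, 0 < c ∧
      ∀ ψ : EuclideanSpace ℝ (Fin N) → ℝ, ContDiff ℝ 1 ψ → HasCompactSupport ψ →
        (∀ x, 0 ≤ ψ x) →
        ∫ x, g x * (u x ^ (-δ) + u x ^ (-γ)) * u x ^ (-2 * β - p + 1) * ψ x ^ p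
          ≤ c * ∫ x, w x * u x ^ (-2 * β) * ‖gradient ψ x‖ ^ p := by
  rintro β ⟨hβ0, hβsp⟩
  subst hsp
  obtain ⟨η, hη, habsorb⟩ := exists_absorption_constant (by linarith) hδ (by linarith)
    (sub_one_mul_sq_lt_of_lt_sp hp hδ hβ0 hβsp)
  obtain ⟨C₁, hC₁, hY₁⟩ :=
    Real.exists_rpow_mul_rpow_le_add (k := p - 1) (p := p) (by linarith) (by linarith) hη
  obtain ⟨C₂, hC₂, hY₂⟩ :=
    Real.exists_rpow_mul_rpow_le_add (k := p - 2) (p := p) (by linarith) (by linarith) hη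
  obtain ⟨c, hc, hLR⟩ := habsorb C₁ C₂ hC₁.le hC₂.le
  refine ⟨c, hc, fun ψ hψ hψc hψ0 => ?_⟩
  have hR : ∫ x, w x * u x ^ (-2 * β) * ‖gradient ψ x‖ ^ p = ∫ x, energyDensity w u ψ β p 0 x := by
    simp only [energyDensity, Real.rpow_zero, mul_one, sub_zero]
  have hR0 : 0 ≤ ∫ x, energyDensity w u ψ β p 0 x :=
    integral_nonneg_of_ae <| hw_pos.mono fun x hwx => by
      have := hu_pos x
      simp only [Pi.zero_apply, energyDensity]
      positivity
  have hweak := integral_energyDensity_eq_of_weak hw_loc hu hu_pos hψ hψc hψ0 β hp weak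
  rw [hR]
  exact hLR _ _ _ _ _ _ hR0
    (mul_integral_reactionDensity_le_of_stable hw_loc hg_loc hg_pos hu hu_pos hψ hψc hψ0 β hp hδγ
      stable)
    (by rwa [show 2 * (β + (p - 2) / 2) + 1 = 2 * β + p - 1 by ring])
    (abs_integral_crossDensity_le hw_loc hw_pos hu hu_pos hψ hψc hψ0 β hp)
    (integral_energyDensity_le hw_loc hw_pos hu hu_pos hψ hψc hψ0 β (by linarith) (by linarith) hY₁)
    (integral_energyDensity_le hw_loc hw_pos hu hu_pos hψ hψc hψ0 β (by linarith) (by linarith) hY₂)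

theorem stmt_2
    {N : ℕ} (hN : 1 ≤ N)
    (p : ℝ) (hp : 2 ≤ p)
    (δ γ : ℝ) (hδ : 0 < δ) (hδγ : δ ≤ γ)
    (hcond : 2 < p → (p - 1) ^ 2 / 4 < δ)
    (sp : ℝ) (hsp : sp = if p = 2 then δ + Real.sqrt (δ ^ 2 + δ) else 2 * δ / (p - 1) - (p - 1) / 2)
    (w g : EuclideanSpace ℝ (Fin N) → ℝ)
    (hw_loc : LocallyIntegrable w volume)
    (hg_loc : LocallyIntegrable g volume)
    (hw_pos : ∀ᵐ x ∂volume, 0 < w x)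
    (hg_pos : ∀ᵐ x ∂volume, 0 < g x)
    (hginv : MemLp (fun x => (g x)⁻¹) ⊤ volume)
    (u : EuclideanSpace ℝ (Fin N) → ℝ)
    (hu : ContDiff ℝ 1 u)
    (hu_pos : ∀ x, 0 < u x)
    (weak : ∀ φ : EuclideanSpace ℝ (Fin N) → ℝ, ContDiff ℝ 1 φ → HasCompactSupport φ →
      ∫ x, w x * ‖gradient u x‖ ^ (p - 2) * ⟪gradient u x, gradient φ x⟫
        = ∫ x, g x * (-(u x ^ (-δ)) - u x ^ (-γ)) * φ x)
    (stable : ∀ φ : EuclideanSpace ℝ (Fin N) → ℝ, ContDiff ℝ 1 φ → HasCompactSupport φ →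
      ∫ x, g x * (δ * u x ^ (-δ - 1) + γ * u x ^ (-γ - 1)) * φ x ^ 2
        ≤ (p - 1) * ∫ x, w x * ‖gradient u x‖ ^ (p - 2) * ‖gradient φ x‖ ^ 2) :
    ∀ β ∈ Set.Ioo (0 : ℝ) sp, ∃ c : ℝ, 0 < c ∧
      ∀ ψ : EuclideanSpace ℝ (Fin N) → ℝ, ContDiff ℝ 1 ψ → HasCompactSupport ψ →
        (∀ x, 0 ≤ ψ x) →
        ∫ x, g x * (u x ^ (-δ) + u x ^ (-γ)) * u x ^ (-2 * β - p + 1) * ψ x ^ p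
          ≤ c * ∫ x, w x * u x ^ (-2 * β) * ‖gradient ψ x‖ ^ p :=
  stmt_2_general p hp δ γ hδ hδγ sp hsp w g hw_loc hg_loc hw_pos hg_pos u hu hu_pos weak stable
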